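/- arXiv:2011.00373 — 2 statements merged into one kernel-verified Lean document; each statement's English description precedes it below -/
import Mathlib

section
/- Under additive separability of treatment effects (τ_i(S) = τ_i(S∖{s}) + τ_i(s) for all S and s∈S), with three candidate locations per region of which exactly two are realized uniformly when the region is treated, the estimator τ̂_i^{additive}(s₁) = (1/2)[ 1{ξ={s₁,s₂}}/Pr(ξ={s₁,s₂}) · Y_i + 1{ξ={s₁,s₃}}/Pr(ξ={s₁,s₃}) · Y_i − 1{ξ={s₂,s₃}}/Pr(ξ={s₂,s₃}) · Y_i − (1−W)/(1−Pr(W=1)) · Y_i ] satisfies E(τ̂_i^{additive}(s₁)) = τ_i(s₁). -/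
open Finset

lemma key16 {Ω L : Type*} [Fintype Ω] [DecidableEq L]
    (p : Ω → ℝ) (ξ : Ω → Finset L) (Y : Finset L → ℝ) (A : Finset L) (c : ℝ) :
    ∑ ω, p ω * ((if ξ ω = A then (1:ℝ) else 0) / c * Y (ξ ω))
      = (∑ ω ∈ Finset.univ.filter (fun ω => ξ ω = A), p ω) * (Y A / c) := by
  rw [Finset.sum_mul]
  rw [Finset.sum_filter]
  apply Finset.sum_congr rfl
  intro ω _
  by_cases h : ξ ω = A
  · rw [if_pos h, if_pos h, h]; ring
  · rw [if_neg h, if_neg h]; ring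

/-- Under additive separability of treatment effects, with three candidate locations of
which exactly two are realized uniformly when the region is treated, the estimator
`τ̂ᵢ^additive(s₁)` is unbiased for `τᵢ(s₁) = Yᵢ({s₁}) − Yᵢ(∅)`. -/
theorem stmt16 {Ω L : Type*} [Fintype Ω] [DecidableEq L]
    (p : Ω → ℝ) (hp : ∀ ω, 0 ≤ p ω) (hpsum : ∑ ω, p ω = 1)
    (s1 s2 s3 : L) (h12 : s1 ≠ s2) (h13 : s1 ≠ s3) (h23 : s2 ≠ s3)
    (Y : Finset L → ℝ)
    (hadd : ∀ (A : Finset L) (t : L), t ∈ A →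
      Y A - Y ∅ = (Y (A.erase t) - Y ∅) + (Y {t} - Y ∅))
    (ξ : Ω → Finset L)
    (pW : ℝ) (hpW0 : 0 < pW) (hpW1 : pW < 1)
    (hP0 : ∑ ω ∈ Finset.univ.filter (fun ω => ξ ω = ∅), p ω = 1 - pW)
    (hP12 : ∑ ω ∈ Finset.univ.filter (fun ω => ξ ω = ({s1, s2} : Finset L)), p ω = pW / 3)
    (hP13 : ∑ ω ∈ Finset.univ.filter (fun ω => ξ ω = ({s1, s3} : Finset L)), p ω = pW / 3)
    (hP23 : ∑ ω ∈ Finset.univ.filter (fun ω => ξ ω = ({s2, s3} : Finset L)), p ω = pW / 3) :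
    ∑ ω, p ω * ((1 / 2) *
        ((if ξ ω = ({s1, s2} : Finset L) then (1:ℝ) else 0) / (pW / 3) * Y (ξ ω)
        + (if ξ ω = ({s1, s3} : Finset L) then (1:ℝ) else 0) / (pW / 3) * Y (ξ ω)
        - (if ξ ω = ({s2, s3} : Finset L) then (1:ℝ) else 0) / (pW / 3) * Y (ξ ω)
        - (if ξ ω = (∅ : Finset L) then (1:ℝ) else 0) / (1 - pW) * Y (ξ ω)))
      = Y {s1} - Y ∅ := by
  have hpW3 : pW / 3 ≠ 0 := by positivity
  have h1pW : (1 : ℝ) - pW ≠ 0 := by linarith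
  have hsum : ∑ ω, p ω * ((1 / 2) *
        ((if ξ ω = ({s1, s2} : Finset L) then (1:ℝ) else 0) / (pW / 3) * Y (ξ ω)
        + (if ξ ω = ({s1, s3} : Finset L) then (1:ℝ) else 0) / (pW / 3) * Y (ξ ω)
        - (if ξ ω = ({s2, s3} : Finset L) then (1:ℝ) else 0) / (pW / 3) * Y (ξ ω)
        - (if ξ ω = (∅ : Finset L) then (1:ℝ) else 0) / (1 - pW) * Y (ξ ω)))
      = (1/2) * ((∑ ω, p ω * ((if ξ ω = ({s1, s2} : Finset L) then (1:ℝ) else 0) / (pW / 3) * Y (ξ ω)))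
        + (∑ ω, p ω * ((if ξ ω = ({s1, s3} : Finset L) then (1:ℝ) else 0) / (pW / 3) * Y (ξ ω)))
        - (∑ ω, p ω * ((if ξ ω = ({s2, s3} : Finset L) then (1:ℝ) else 0) / (pW / 3) * Y (ξ ω)))
        - (∑ ω, p ω * ((if ξ ω = (∅ : Finset L) then (1:ℝ) else 0) / (1 - pW) * Y (ξ ω)))) := by
    simp only [← Finset.sum_add_distrib, ← Finset.sum_sub_distrib]
    rw [Finset.mul_sum]
    apply Finset.sum_congr rfl
    intro ω _
    ring
  rw [hsum, key16, key16, key16, key16, hP0, hP12, hP13, hP23]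
  have e12 : Y ({s1, s2} : Finset L) - Y ∅ = (Y {s1} - Y ∅) + (Y {s2} - Y ∅) := by
    have := hadd {s1, s2} s2 (by simp)
    rw [show ({s1, s2} : Finset L).erase s2 = {s1} by
      ext x; simp only [Finset.mem_erase, Finset.mem_insert, Finset.mem_singleton]
      constructor
      · rintro ⟨hx, h | h⟩ <;> [exact h; exact absurd h hx]
      · rintro rfl; exact ⟨h12, Or.inl rfl⟩] at this
    linarith
  have e13 : Y ({s1, s3} : Finset L) - Y ∅ = (Y {s1} - Y ∅) + (Y {s3} - Y ∅) := by
    have := hadd {s1, s3} s3 (by simp)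
    rw [show ({s1, s3} : Finset L).erase s3 = {s1} by
      ext x; simp only [Finset.mem_erase, Finset.mem_insert, Finset.mem_singleton]
      constructor
      · rintro ⟨hx, h | h⟩ <;> [exact h; exact absurd h hx]
      · rintro rfl; exact ⟨h13, Or.inl rfl⟩] at this
    linarith
  have e23 : Y ({s2, s3} : Finset L) - Y ∅ = (Y {s2} - Y ∅) + (Y {s3} - Y ∅) := by
    have := hadd {s2, s3} s3 (by simp)
    rw [show ({s2, s3} : Finset L).erase s3 = {s2} by
      ext x; simp only [Finset.mem_erase, Finset.mem_insert, Finset.mem_singleton]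
      constructor
      · rintro ⟨hx, h | h⟩ <;> [exact h; exact absurd h hx]
      · rintro rfl; exact ⟨h23, Or.inl rfl⟩] at this
    linarith
  field_simp
  nlinarith [e12, e13, e23, mul_pos hpW0 (by norm_num : (0:ℝ) < 1)]
end

section
/- Under the assumption that only the nearest realized treatment location matters, if location s is strictly closer to individual i than all other candidate locations in the region, then the estimator 1{s∈ξ}/Pr(s∈ξ) · Y_i − (1−W)/(1−Pr(W=1)) · Y_i is unbiased for τ_i(s) = Y_i({s}) − Y_i(0), where Y_i is the realized outcome. -/
open Finset

/-- Under the assumption that only the nearest realized treatment location matters, if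
location `s` is strictly closer to individual `i` than all other candidate locations,
then `1{s∈ξ}/Pr(s∈ξ) · Yᵢ − (1−W)/(1−Pr(W=1)) · Yᵢ` is unbiased for
`τᵢ(s) = Yᵢ({s}) − Yᵢ(∅)`. -/
theorem stmt17 {Ω L : Type*} [Fintype Ω] [DecidableEq L]
    (p : Ω → ℝ) (hp : ∀ ω, 0 ≤ p ω) (hpsum : ∑ ω, p ω = 1)
    (dist : L → ℝ) (Y : Finset L → ℝ) (s : L)
    (hnearest : ∀ (A : Finset L) (s0 : L), s0 ∈ A →
      (∀ s' ∈ A, dist s0 ≤ dist s') → Y A = Y {s0})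
    (hclosest : ∀ s' : L, s' ≠ s → dist s < dist s')
    (ξ : Ω → Finset L)
    (ps pW : ℝ) (hps : 0 < ps) (hpW0 : 0 < pW) (hpW1 : pW < 1)
    (hPs : ∑ ω ∈ Finset.univ.filter (fun ω => s ∈ ξ ω), p ω = ps)
    (hP0 : ∑ ω ∈ Finset.univ.filter (fun ω => ξ ω = ∅), p ω = 1 - pW) :
    ∑ ω, p ω * ((if s ∈ ξ ω then (1:ℝ) else 0) / ps * Y (ξ ω)
        - (if ξ ω = (∅ : Finset L) then (1:ℝ) else 0) / (1 - pW) * Y (ξ ω))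
      = Y {s} - Y ∅ := by
  have hpW' : (1:ℝ) - pW ≠ 0 := by linarith
  have key : ∀ ω, p ω * ((if s ∈ ξ ω then (1:ℝ) else 0) / ps * Y (ξ ω)
        - (if ξ ω = (∅ : Finset L) then (1:ℝ) else 0) / (1 - pW) * Y (ξ ω))
      = p ω * (if s ∈ ξ ω then (1:ℝ) else 0) * (Y {s} / ps)
        - p ω * (if ξ ω = (∅ : Finset L) then (1:ℝ) else 0) * (Y ∅ / (1 - pW)) := by
    intro ω
    by_cases h1 : s ∈ ξ ω
    · have hne : ξ ω ≠ ∅ := fun h => by simp [h] at h1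
      have hY : Y (ξ ω) = Y {s} := hnearest _ s h1 (fun s' _ => by
        by_cases hs : s' = s
        · simp [hs]
        · exact le_of_lt (hclosest s' hs))
      rw [if_pos h1, if_neg hne, hY]; ring
    · by_cases h2 : ξ ω = ∅
      · rw [if_neg h1, if_pos h2, h2]; ring
      · simp [h1, h2]
  simp_rw [key]
  rw [Finset.sum_sub_distrib]
  have e1 : ∑ ω, p ω * (if s ∈ ξ ω then (1:ℝ) else 0) * (Y {s} / ps)
      = ps * (Y {s} / ps) := by
    rw [← Finset.sum_mul, ← hPs, Finset.sum_filter]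
    congr 1
    exact Finset.sum_congr rfl fun ω _ => by by_cases h : s ∈ ξ ω <;> simp [h]
  have e2 : ∑ ω, p ω * (if ξ ω = (∅ : Finset L) then (1:ℝ) else 0) * (Y ∅ / (1 - pW))
      = (1 - pW) * (Y ∅ / (1 - pW)) := by
    rw [← Finset.sum_mul, ← hP0, Finset.sum_filter]
    congr 1
    exact Finset.sum_congr rfl fun ω _ => by by_cases h : ξ ω = ∅ <;> simp [h]
  rw [e1, e2]
  field_simp
end
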